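/- arXiv:math/0602097 — 2 statements merged into one kernel-verified Lean document; each statement's English description precedes it below -/
import Mathlib

section
/- Let A be an invertible real symmetric m×m matrix with signature (σ⁺₁, σ⁻₁), C an invertible real symmetric n×n matrix with signature (σ⁺₂, σ⁻₂), B a real g×m matrix, and D a real g×n matrix. Then the symmetric block matrix T = [A, Bᵀ, 0, 0; B, B A⁻¹ Bᵀ, -I, 0; 0, -I, D C⁻¹ Dᵀ, D; 0, 0, Dᵀ, C] has signature (σ⁺₁ + σ⁺₂ + g, σ⁻₁ + σ⁻₂ + g). -/
open Matrix

noncomputable def posEigCount {n : Type*} [Fintype n] [DecidableEq n]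
    {M : Matrix n n ℝ} (hM : M.IsHermitian) : ℕ :=
  (Finset.univ.filter fun i => 0 < hM.eigenvalues i).card

noncomputable def negEigCount {n : Type*} [Fintype n] [DecidableEq n]
    {M : Matrix n n ℝ} (hM : M.IsHermitian) : ℕ :=
  (Finset.univ.filter fun i => hM.eigenvalues i < 0).card

/-- The block matrix `[A, Bᵀ, 0, 0; B, BA⁻¹Bᵀ, -I, 0; 0, -I, DC⁻¹Dᵀ, D; 0, 0, Dᵀ, C]`. -/
noncomputable def glueMatrix {m n g : ℕ}
    (A : Matrix (Fin m) (Fin m) ℝ) (C : Matrix (Fin n) (Fin n) ℝ)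
    (B : Matrix (Fin g) (Fin m) ℝ) (D : Matrix (Fin g) (Fin n) ℝ) :
    Matrix ((Fin m ⊕ Fin g) ⊕ (Fin g ⊕ Fin n)) ((Fin m ⊕ Fin g) ⊕ (Fin g ⊕ Fin n)) ℝ :=
  Matrix.fromBlocks
    (Matrix.fromBlocks A Bᵀ B (B * A⁻¹ * Bᵀ))
    (Matrix.fromBlocks 0 0 (-1) 0)
    (Matrix.fromBlocks 0 (-1) 0 0)
    (Matrix.fromBlocks (D * C⁻¹ * Dᵀ) D Dᵀ C)

/-!
By Sylvester's law of inertia the eigenvalue signs of a real symmetric matrix are those of any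
diagonal matrix congruent to it. Clearing `Bᵀ` with `A` and `D` with `C` (block elimination)
makes `T` congruent to `A ⊕ H ⊕ C`, where `H = [0, -I; -I, 0]` is hyperbolic; the change of
variables `y = u + v`, `z = u - v` diagonalizes `H` as `diag(-2 I, 2 I)`, which contributes
exactly `g` positive and `g` negative squares.
-/

namespace Matrix

open QuadraticMap

variable {ι κ R : Type*} [Fintype ι] [DecidableEq ι] [Fintype κ] [DecidableEq κ] [CommRing R]

theorem toQuadraticForm'_apply (M : Matrix ι ι R) (x : ι → R) :
    M.toQuadraticForm' x = x ⬝ᵥ M *ᵥ x := by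
  simp [toQuadraticForm', toLinearMap₂'_apply']

theorem toQuadraticForm'_diagonal (d : ι → R) :
    (diagonal d).toQuadraticForm' = weightedSumSquares R d := by
  ext x
  simp only [toQuadraticForm'_apply, weightedSumSquares_apply, dotProduct, mulVec_diagonal,
    smul_eq_mul]
  exact Finset.sum_congr rfl fun i _ => by ring

theorem toQuadraticForm'_transpose_mul_mul_apply (M P : Matrix ι ι R) (x : ι → R) :
    (Pᵀ * M * P).toQuadraticForm' x = M.toQuadraticForm' (P *ᵥ x) := by
  simp only [toQuadraticForm'_apply, ← mulVec_mulVec, dotProduct_mulVec, vecMul_transpose]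

def IsCongruent (M N : Matrix ι ι R) : Prop :=
  ∃ P : Matrix ι ι R, IsUnit P ∧ Pᵀ * M * P = N

namespace IsCongruent

variable {M N L : Matrix ι ι R}

@[refl]
theorem refl (M : Matrix ι ι R) : M.IsCongruent M :=
  ⟨1, isUnit_one, by simp⟩

@[trans]
theorem trans (hMN : M.IsCongruent N) (hNL : N.IsCongruent L) : M.IsCongruent L := by
  obtain ⟨P, hP, rfl⟩ := hMN
  obtain ⟨U, hU, rfl⟩ := hNL
  exact ⟨P * U, hP.mul hU, by simp only [transpose_mul, Matrix.mul_assoc]⟩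

theorem toQuadraticForm'_equivalent (h : M.IsCongruent N) :
    M.toQuadraticForm'.Equivalent N.toQuadraticForm' := by
  obtain ⟨P, hP, rfl⟩ := h
  let := hP.invertible
  exact ⟨{ (P.toLinearEquiv' this).symm with
    map_app' := fun x => by simp [toQuadraticForm'_transpose_mul_mul_apply] }⟩

protected theorem fromBlocks {A A' : Matrix ι ι R} {C C' : Matrix κ κ R}
    (hA : A.IsCongruent A') (hC : C.IsCongruent C') :
    (fromBlocks A 0 0 C).IsCongruent (fromBlocks A' 0 0 C') := by
  obtain ⟨U, hU, rfl⟩ := hA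
  obtain ⟨V, hV, rfl⟩ := hC
  refine ⟨Matrix.fromBlocks U 0 0 V, ?_, by simp [fromBlocks_transpose, fromBlocks_multiply]⟩
  rw [isUnit_iff_isUnit_det, det_fromBlocks_zero₂₁]
  exact ((isUnit_iff_isUnit_det _).mp hU).mul ((isUnit_iff_isUnit_det _).mp hV)

end IsCongruent

theorem IsHermitian.isCongruent_diagonal_eigenvalues {M : Matrix ι ι ℝ} (hM : M.IsHermitian) :
    M.IsCongruent (diagonal hM.eigenvalues) := by
  refine ⟨hM.eigenvectorUnitary, (Unitary.toUnits hM.eigenvectorUnitary).isUnit, ?_⟩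
  simpa [star_eq_conjTranspose] using hM.conjStarAlgAut_star_eigenvectorUnitary

end Matrix

section Inertia

open Matrix QuadraticForm

variable {ι : Type*} [Fintype ι] [DecidableEq ι] {M : Matrix ι ι ℝ} {d : ι → ℝ}

theorem Matrix.IsCongruent.sigPos_toQuadraticForm' (h : M.IsCongruent (diagonal d)) :
    sigPos M.toQuadraticForm' = (Finset.univ.filter fun i => 0 < d i).card := by
  rw [h.toQuadraticForm'_equivalent.sigPos_eq, toQuadraticForm'_diagonal,
    sigPos_weightedSumSquares, Set.ncard_eq_toFinset_card']
  simp

theorem Matrix.IsCongruent.sigNeg_toQuadraticForm' (h : M.IsCongruent (diagonal d)) :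
    sigNeg M.toQuadraticForm' = (Finset.univ.filter fun i => d i < 0).card := by
  rw [h.toQuadraticForm'_equivalent.sigNeg_eq, toQuadraticForm'_diagonal,
    sigNeg_weightedSumSquares, Set.ncard_eq_toFinset_card']
  simp

theorem posEigCount_eq_card_of_isCongruent (hM : M.IsHermitian)
    (h : M.IsCongruent (diagonal d)) :
    posEigCount hM = (Finset.univ.filter fun i => 0 < d i).card := by
  rw [← h.sigPos_toQuadraticForm', hM.isCongruent_diagonal_eigenvalues.sigPos_toQuadraticForm',
    posEigCount]

theorem negEigCount_eq_card_of_isCongruent (hM : M.IsHermitian)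
    (h : M.IsCongruent (diagonal d)) :
    negEigCount hM = (Finset.univ.filter fun i => d i < 0).card := by
  rw [← h.sigNeg_toQuadraticForm', hM.isCongruent_diagonal_eigenvalues.sigNeg_toQuadraticForm',
    negEigCount]

end Inertia

theorem Finset.card_filter_sumElim {α β γ : Type*} [Fintype α] [Fintype β] (p : γ → Prop)
    [DecidablePred p] (f : α → γ) (h : β → γ) :
    (univ.filter fun x => p (Sum.elim f h x)).card =
      (univ.filter fun a => p (f a)).card + (univ.filter fun b => p (h b)).card := by
  simp only [Finset.card_filter]
  exact Fintype.sum_sum_type _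

section glueMatrix

open Matrix

variable {m n g : ℕ}

theorem glueMatrix_isCongruent {A : Matrix (Fin m) (Fin m) ℝ} {C : Matrix (Fin n) (Fin n) ℝ}
    (hA : A.IsSymm) (hAu : IsUnit A.det) (hC : C.IsSymm) (hCu : IsUnit C.det)
    (B : Matrix (Fin g) (Fin m) ℝ) (D : Matrix (Fin g) (Fin n) ℝ) :
    (glueMatrix A C B D).IsCongruent (fromBlocks (fromBlocks A 0 0 0) (fromBlocks 0 0 (-1) 0)
      (fromBlocks 0 (-1) 0 0) (fromBlocks 0 0 0 C)) := by
  have hAi : A⁻¹ᵀ = A⁻¹ := by rw [transpose_nonsing_inv, hA.eq]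
  have hCi : C⁻¹ᵀ = C⁻¹ := by rw [transpose_nonsing_inv, hC.eq]
  refine ⟨fromBlocks (fromBlocks 1 (-(A⁻¹ * Bᵀ)) 0 1) 0 0 (fromBlocks 1 0 (-(C⁻¹ * Dᵀ)) 1),
    ?_, ?_⟩
  · simp [isUnit_iff_isUnit_det, det_fromBlocks_zero₂₁]
  · simp [glueMatrix, fromBlocks_transpose, fromBlocks_multiply, transpose_mul, Matrix.mul_assoc,
      hAi, hCi, mul_nonsing_inv_cancel_left _ _ hAu, mul_nonsing_inv_cancel_left _ _ hCu,
      nonsing_inv_mul _ hAu, nonsing_inv_mul _ hCu]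

theorem isCongruent_hyperbolic (A : Matrix (Fin m) (Fin m) ℝ) (C : Matrix (Fin n) (Fin n) ℝ) :
    (fromBlocks (fromBlocks A 0 0 0) (fromBlocks 0 0 (-1) 0) (fromBlocks 0 (-1) 0 0)
      (fromBlocks 0 0 0 C) : Matrix ((Fin m ⊕ Fin g) ⊕ (Fin g ⊕ Fin n)) _ ℝ).IsCongruent
      (fromBlocks (fromBlocks A 0 0 (diagonal (-2))) 0 0 (fromBlocks (diagonal 2) 0 0 C)) := by
  refine ⟨fromBlocks 1 (fromBlocks 0 0 1 0) (fromBlocks 0 1 0 0) (fromBlocks (-1) 0 0 1), ?_, ?_⟩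
  · rw [isUnit_iff_isUnit_det, det_fromBlocks_one₁₁]
    norm_num [fromBlocks_multiply, sub_eq_add_neg, fromBlocks_neg, fromBlocks_add, det_neg]
    change ¬(diagonal (2 : Fin g → ℝ)).det = 0
    simp [det_diagonal]
  · simp [← fromBlocks_one, fromBlocks_transpose, fromBlocks_multiply, fromBlocks_add]
    norm_num
    simp [← diagonal_ofNat']

end glueMatrix

theorem stmt_5 (m n g : ℕ)
    (A : Matrix (Fin m) (Fin m) ℝ) (hA : A.IsHermitian) (hAu : IsUnit A.det)
    (C : Matrix (Fin n) (Fin n) ℝ) (hC : C.IsHermitian) (hCu : IsUnit C.det)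
    (B : Matrix (Fin g) (Fin m) ℝ) (D : Matrix (Fin g) (Fin n) ℝ)
    (hT : (glueMatrix A C B D).IsHermitian) :
    posEigCount hT = posEigCount hA + posEigCount hC + g ∧
    negEigCount hT = negEigCount hA + negEigCount hC + g := by
  have hdiag : (glueMatrix A C B D).IsCongruent (Matrix.diagonal
      (Sum.elim (Sum.elim hA.eigenvalues (-2)) (Sum.elim 2 hC.eigenvalues))) := by
    refine ((glueMatrix_isCongruent (Matrix.isHermitian_iff_isSymm.mp hA) hAu
      (Matrix.isHermitian_iff_isSymm.mp hC) hCu B D).trans (isCongruent_hyperbolic A C)).trans ?_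
    simpa only [Matrix.fromBlocks_diagonal] using
      (hA.isCongruent_diagonal_eigenvalues.fromBlocks (.refl (Matrix.diagonal (-2)))).fromBlocks
        ((Matrix.IsCongruent.refl (Matrix.diagonal 2)).fromBlocks
          hC.isCongruent_diagonal_eigenvalues)
  rw [posEigCount_eq_card_of_isCongruent hT hdiag, negEigCount_eq_card_of_isCongruent hT hdiag]
  simp only [Finset.card_filter_sumElim ((0 : ℝ) < ·), Finset.card_filter_sumElim (· < (0 : ℝ))]
  norm_num [posEigCount, negEigCount]
  omega
end

section
/- With T as in the previous block-matrix setting (A, C invertible real symmetric, T = [A, Bᵀ, 0, 0; B, BA⁻¹Bᵀ, -I, 0; 0, -I, DC⁻¹Dᵀ, D; 0, 0, Dᵀ, C]), if σ⁺ denotes the number of positive eigenvalues of T, σ⁺₁ that of A and σ⁺₂ that of C, then σ⁺₁ + σ⁺₂ + g − σ⁺ = 0. -/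
open Matrix

/-!
Eliminating `B` against `A` and `D` against `C` is a congruence `T ↦ Eᵀ T E` that turns `T` into
`diag(A, H, C)`, where `H = [0, -I; -I, 0]` acts on the two middle copies of `ℝ^g`. The further
substitution `(u, v) ↦ (u - v, u + v)` of these copies turns the form `-2 u·v` of `H` into
`-2|u|² + 2|v|²`. By Sylvester's law of inertia `σ⁺` is the largest dimension of a subspace on
which `x ↦ xᵀ M x` is positive definite, hence invariant under congruence, and so
`σ⁺(T) = σ⁺(A) + 0 + g + σ⁺(C)`.
-/

open Module Finset

section Inertia

variable {ι : Type*} [Fintype ι]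

def PosDefOn (M : Matrix ι ι ℝ) (W : Submodule ℝ (ι → ℝ)) : Prop :=
  ∀ x ∈ W, x ≠ 0 → 0 < x ⬝ᵥ M *ᵥ x

def NegSemidefOn (M : Matrix ι ι ℝ) (W : Submodule ℝ (ι → ℝ)) : Prop :=
  ∀ x ∈ W, x ⬝ᵥ M *ᵥ x ≤ 0

lemma mulVec_dotProduct_mulVec_mulVec (M E : Matrix ι ι ℝ) (x : ι → ℝ) :
    (E *ᵥ x) ⬝ᵥ M *ᵥ (E *ᵥ x) = x ⬝ᵥ (Eᵀ * M * E) *ᵥ x := by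
  rw [← mulVec_mulVec, ← mulVec_mulVec, dotProduct_mulVec x, vecMul_transpose]

lemma PosDefOn.map {M E : Matrix ι ι ℝ} {W : Submodule ℝ (ι → ℝ)}
    (hW : PosDefOn (Eᵀ * M * E) W) : PosDefOn M (W.map E.mulVecLin) := by
  rintro _ ⟨x, hx, rfl⟩ hx0
  rw [mulVecLin_apply, mulVec_dotProduct_mulVec_mulVec]
  exact hW x hx (by rintro rfl; simp at hx0)

lemma NegSemidefOn.map {M E : Matrix ι ι ℝ} {W : Submodule ℝ (ι → ℝ)}
    (hW : NegSemidefOn (Eᵀ * M * E) W) : NegSemidefOn M (W.map E.mulVecLin) := by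
  rintro _ ⟨x, hx, rfl⟩
  rw [mulVecLin_apply, mulVec_dotProduct_mulVec_mulVec]
  exact hW x hx

lemma finrank_map_mulVecLin {E : Matrix ι ι ℝ} (hE : Function.Injective E.mulVec)
    (W : Submodule ℝ (ι → ℝ)) : finrank ℝ (W.map E.mulVecLin) = finrank ℝ W :=
  (Submodule.equivMapOfInjective _ hE W).finrank_eq.symm

lemma PosDefOn.finrank_add_finrank_le {M : Matrix ι ι ℝ}
    {W W' : Submodule ℝ (ι → ℝ)} (hW : PosDefOn M W) (hW' : NegSemidefOn M W') :
    finrank ℝ W + finrank ℝ W' ≤ Fintype.card ι := by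
  have hdisj : Disjoint W W' := by
    rw [Submodule.disjoint_def]
    intro x hx hx'
    by_contra hx0
    exact (hW x hx hx0).not_ge (hW' x hx')
  simpa using Submodule.finrank_add_finrank_le_of_disjoint hdisj

noncomputable def coordSubmodule (s : Finset ι) : Submodule ℝ (ι → ℝ) :=
  (Finsupp.supported ℝ ℝ (s : Set ι)).map (Finsupp.linearEquivFunOnFinite ℝ ℝ ι).toLinearMap

lemma mem_coordSubmodule {s : Finset ι} {x : ι → ℝ} :
    x ∈ coordSubmodule s ↔ ∀ i ∉ s, x i = 0 := by
  simp [coordSubmodule, Submodule.mem_map_equiv, Finsupp.mem_supported']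

lemma finrank_coordSubmodule (s : Finset ι) : finrank ℝ (coordSubmodule s) = #s := by
  rw [coordSubmodule, LinearEquiv.finrank_map_eq, (Finsupp.supportedEquivFinsupp _).finrank_eq,
    finrank_finsupp_self]
  simp

variable [DecidableEq ι]

lemma dotProduct_diagonal_mulVec_self (d x : ι → ℝ) :
    x ⬝ᵥ diagonal d *ᵥ x = ∑ i, d i * x i ^ 2 := by
  simp only [dotProduct, mulVec_diagonal]
  exact sum_congr rfl fun i _ => by ring

lemma posDefOn_diagonal (d : ι → ℝ) : PosDefOn (diagonal d) (coordSubmodule {i | 0 < d i}) := by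
  intro x hx hx0
  rw [mem_coordSubmodule] at hx
  obtain ⟨j, hj⟩ := Function.ne_iff.mp hx0
  have hdj : 0 < d j := by simpa using not_imp_comm.mp (hx j) hj
  rw [dotProduct_diagonal_mulVec_self]
  refine sum_pos' (fun i _ => ?_) ⟨j, mem_univ j, mul_pos hdj (pow_two_pos_of_ne_zero hj)⟩
  by_cases hi : 0 < d i
  · positivity
  · simp [hx i (by simpa using hi)]

lemma negSemidefOn_diagonal (d : ι → ℝ) :
    NegSemidefOn (diagonal d) (coordSubmodule {i | d i ≤ 0}) := by
  intro x hx
  rw [mem_coordSubmodule] at hx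
  rw [dotProduct_diagonal_mulVec_self]
  refine sum_nonpos fun i _ => ?_
  by_cases hi : d i ≤ 0
  · exact mul_nonpos_of_nonpos_of_nonneg hi (sq_nonneg _)
  · simp [hx i (by simpa using hi)]

lemma Matrix.IsHermitian.transpose_eigenvectorUnitary_mul_mul {M : Matrix ι ι ℝ}
    (hM : M.IsHermitian) :
    (hM.eigenvectorUnitary : Matrix ι ι ℝ)ᵀ * M * hM.eigenvectorUnitary =
      diagonal hM.eigenvalues := by
  simpa [Unitary.conjStarAlgAut_apply, star_eq_conjTranspose] using
    hM.conjStarAlgAut_star_eigenvectorUnitary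

lemma Matrix.IsHermitian.injective_mulVec_eigenvectorUnitary {M : Matrix ι ι ℝ}
    (hM : M.IsHermitian) : Function.Injective (hM.eigenvectorUnitary : Matrix ι ι ℝ).mulVec :=
  mulVec_injective_iff_isUnit.2 <| (isUnit_iff_isUnit_det _).2 <|
    isUnit_det_of_left_inverse (Unitary.coe_star_mul_self _)

lemma Matrix.IsHermitian.exists_posDefOn {M : Matrix ι ι ℝ} (hM : M.IsHermitian) :
    ∃ W, PosDefOn M W ∧ finrank ℝ W = posEigCount hM := by
  refine ⟨(coordSubmodule {i | 0 < hM.eigenvalues i}).map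
    (hM.eigenvectorUnitary : Matrix ι ι ℝ).mulVecLin, PosDefOn.map ?_, ?_⟩
  · rw [hM.transpose_eigenvectorUnitary_mul_mul]
    exact posDefOn_diagonal _
  · rw [finrank_map_mulVecLin hM.injective_mulVec_eigenvectorUnitary, finrank_coordSubmodule]
    rfl

lemma Matrix.IsHermitian.exists_negSemidefOn {M : Matrix ι ι ℝ} (hM : M.IsHermitian) :
    ∃ W, NegSemidefOn M W ∧ posEigCount hM + finrank ℝ W = Fintype.card ι := by
  refine ⟨(coordSubmodule {i | hM.eigenvalues i ≤ 0}).map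
    (hM.eigenvectorUnitary : Matrix ι ι ℝ).mulVecLin, NegSemidefOn.map ?_, ?_⟩
  · rw [hM.transpose_eigenvectorUnitary_mul_mul]
    exact negSemidefOn_diagonal _
  · rw [finrank_map_mulVecLin hM.injective_mulVec_eigenvectorUnitary, finrank_coordSubmodule,
      posEigCount]
    simp only [← not_lt]
    exact (card_filter_add_card_filter_not _).trans card_univ

lemma PosDefOn.finrank_le_posEigCount {M : Matrix ι ι ℝ} (hM : M.IsHermitian)
    {W : Submodule ℝ (ι → ℝ)} (hW : PosDefOn M W) : finrank ℝ W ≤ posEigCount hM := by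
  obtain ⟨W', hW', hdim⟩ := hM.exists_negSemidefOn
  have := hW.finrank_add_finrank_le hW'
  omega

lemma posEigCount_le_of_eq_transpose_mul_mul {M N E : Matrix ι ι ℝ} (hM : M.IsHermitian)
    (hN : N.IsHermitian) (hE : Function.Injective E.mulVec) (h : N = Eᵀ * M * E) :
    posEigCount hN ≤ posEigCount hM := by
  subst h
  obtain ⟨W, hW, hdim⟩ := hN.exists_posDefOn
  rw [← hdim, ← finrank_map_mulVecLin hE]
  exact hW.map.finrank_le_posEigCount hM

/-- Sylvester's law of inertia. -/
lemma posEigCount_eq_of_eq_transpose_mul_mul {M N E : Matrix ι ι ℝ} (hM : M.IsHermitian)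
    (hN : N.IsHermitian) (hE : IsUnit E.det) (h : N = Eᵀ * M * E) :
    posEigCount hN = posEigCount hM := by
  refine le_antisymm (posEigCount_le_of_eq_transpose_mul_mul hM hN ?_ h)
    (posEigCount_le_of_eq_transpose_mul_mul hN hM (E := E⁻¹) ?_ ?_)
  · exact mulVec_injective_iff_isUnit.2 ((isUnit_iff_isUnit_det E).2 hE)
  · exact mulVec_injective_iff_isUnit.2 ((isUnit_iff_isUnit_det _).2 (isUnit_nonsing_inv_det E hE))
  · rw [h, transpose_nonsing_inv, Matrix.mul_assoc, Matrix.mul_assoc, mul_nonsing_inv _ hE,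
      Matrix.mul_one, ← Matrix.mul_assoc, nonsing_inv_mul _ (by rwa [det_transpose]),
      Matrix.one_mul]

lemma posEigCount_eq_countP_roots_charpoly {M : Matrix ι ι ℝ} (hM : M.IsHermitian) :
    posEigCount hM = M.charpoly.roots.countP (0 < ·) := by
  rw [hM.roots_charpoly_eq_eigenvalues, Multiset.countP_map, posEigCount]
  rfl

lemma posEigCount_fromBlocks_zero {κ : Type*} [Fintype κ] [DecidableEq κ]
    {M₁ : Matrix ι ι ℝ} {M₂ : Matrix κ κ ℝ} (h₁ : M₁.IsHermitian) (h₂ : M₂.IsHermitian)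
    (h : (fromBlocks M₁ 0 0 M₂).IsHermitian) :
    posEigCount h = posEigCount h₁ + posEigCount h₂ := by
  simp only [posEigCount_eq_countP_roots_charpoly, charpoly_fromBlocks_zero₁₂,
    Polynomial.roots_mul ((charpoly_monic _).mul (charpoly_monic _)).ne_zero, Multiset.countP_add]

lemma posEigCount_diagonal (d : ι → ℝ) (h : (diagonal d).IsHermitian) :
    posEigCount h = #{i | 0 < d i} := by
  rw [posEigCount_eq_countP_roots_charpoly, charpoly_diagonal,
    Polynomial.roots_prod _ _ (prod_ne_zero_iff.2 fun i _ => Polynomial.X_sub_C_ne_zero _)]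
  simp only [Polynomial.roots_X_sub_C, Multiset.bind_singleton, Multiset.countP_map]
  rfl

end Inertia

section Glue

variable {m n g : Type*} [Fintype m] [Fintype n] [Fintype g]
  [DecidableEq m] [DecidableEq n] [DecidableEq g]

noncomputable def schurReduction (A : Matrix m m ℝ) (C : Matrix n n ℝ) (B : Matrix g m ℝ)
    (D : Matrix g n ℝ) : Matrix ((m ⊕ g) ⊕ (g ⊕ n)) ((m ⊕ g) ⊕ (g ⊕ n)) ℝ :=
  fromBlocks (fromBlocks 1 (-(A⁻¹ * Bᵀ)) 0 1) 0 0 (fromBlocks 1 0 (-(C⁻¹ * Dᵀ)) 1)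

/-- The substitution `(a, u, v, c) ↦ (a, u - v, u + v, c)`. -/
def hyperbolicSubstitution : Matrix ((m ⊕ g) ⊕ (g ⊕ n)) ((m ⊕ g) ⊕ (g ⊕ n)) ℝ :=
  fromBlocks 1 (fromBlocks 0 0 (-1) 0) (fromBlocks 0 1 0 0) 1

lemma det_schurReduction (A : Matrix m m ℝ) (C : Matrix n n ℝ) (B : Matrix g m ℝ)
    (D : Matrix g n ℝ) : (schurReduction A C B D).det = 1 := by
  simp [schurReduction, det_fromBlocks_zero₂₁]

lemma det_hyperbolicSubstitution :
    (hyperbolicSubstitution : Matrix ((m ⊕ g) ⊕ (g ⊕ n)) _ ℝ).det = 2 ^ Fintype.card g := by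
  rw [hyperbolicSubstitution, det_fromBlocks_one₂₂, fromBlocks_multiply]
  simp [sub_eq_add_neg, ← fromBlocks_one, fromBlocks_neg, fromBlocks_add, det_fromBlocks_zero₂₁,
    one_add_one_eq_two, ← diagonal_ofNat', det_diagonal]

lemma transpose_hyperbolicSubstitution_mul_mul (A : Matrix m m ℝ) (C : Matrix n n ℝ) :
    (hyperbolicSubstitution : Matrix ((m ⊕ g) ⊕ (g ⊕ n)) _ ℝ)ᵀ *
      fromBlocks (fromBlocks A 0 0 0) (fromBlocks 0 0 (-1) 0) (fromBlocks 0 (-1) 0 0)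
        (fromBlocks 0 0 0 C) * hyperbolicSubstitution =
      fromBlocks (fromBlocks A 0 0 (diagonal (-2))) 0 0
        (fromBlocks (diagonal 2) 0 0 C) := by
  have hneg : (diagonal (-2) : Matrix g g ℝ) = -2 := by
    rw [← diagonal_ofNat', diagonal_neg]
    rfl
  simp [hyperbolicSubstitution, fromBlocks_transpose, fromBlocks_multiply, fromBlocks_add,
    ← neg_add, one_add_one_eq_two, diagonal_ofNat', hneg]

end Glue

lemma transpose_schurReduction_mul_glueMatrix_mul {m n g : ℕ}
    {A : Matrix (Fin m) (Fin m) ℝ} {C : Matrix (Fin n) (Fin n) ℝ} (hA : A.IsSymm)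
    (hAu : IsUnit A.det) (hC : C.IsSymm) (hCu : IsUnit C.det) (B : Matrix (Fin g) (Fin m) ℝ)
    (D : Matrix (Fin g) (Fin n) ℝ) :
    (schurReduction A C B D)ᵀ * glueMatrix A C B D * schurReduction A C B D =
      fromBlocks (fromBlocks A 0 0 0) (fromBlocks 0 0 (-1) 0) (fromBlocks 0 (-1) 0 0)
        (fromBlocks 0 0 0 C) := by
  simp [schurReduction, glueMatrix, fromBlocks_transpose, fromBlocks_multiply, hA.inv.eq,
    hC.inv.eq, Matrix.mul_assoc, nonsing_inv_mul _ hAu, nonsing_inv_mul _ hCu,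
    mul_nonsing_inv_cancel_left _ _ hAu, mul_nonsing_inv_cancel_left _ _ hCu]

theorem stmt_6 (m n g : ℕ)
    (A : Matrix (Fin m) (Fin m) ℝ) (hA : A.IsHermitian) (hAu : IsUnit A.det)
    (C : Matrix (Fin n) (Fin n) ℝ) (hC : C.IsHermitian) (hCu : IsUnit C.det)
    (B : Matrix (Fin g) (Fin m) ℝ) (D : Matrix (Fin g) (Fin n) ℝ)
    (hT : (glueMatrix A C B D).IsHermitian) :
    (posEigCount hA : ℤ) + (posEigCount hC : ℤ) + (g : ℤ) - (posEigCount hT : ℤ) = 0 := by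
  set E := schurReduction A C B D * hyperbolicSubstitution
  have hE : IsUnit E.det := by
    simp [E, det_schurReduction, det_hyperbolicSubstitution]
  have hTE : Eᵀ * glueMatrix A C B D * E =
      fromBlocks (fromBlocks A 0 0 (diagonal (-2))) 0 0 (fromBlocks (diagonal 2) 0 0 C) := by
    calc Eᵀ * glueMatrix A C B D * E = hyperbolicSubstitutionᵀ *
          ((schurReduction A C B D)ᵀ * glueMatrix A C B D * schurReduction A C B D) *
            hyperbolicSubstitution := by
          simp only [E, transpose_mul, Matrix.mul_assoc]
      _ = _ := by
          rw [transpose_schurReduction_mul_glueMatrix_mul (isHermitian_iff_isSymm.1 hA) hAu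
            (isHermitian_iff_isSymm.1 hC) hCu, transpose_hyperbolicSubstitution_mul_mul]
  have hneg := isHermitian_diagonal (n := Fin g) (-2 : Fin g → ℝ)
  have hpos := isHermitian_diagonal (n := Fin g) (2 : Fin g → ℝ)
  have h₁ := hA.fromBlocks conjTranspose_zero hneg
  have h₂ := hpos.fromBlocks conjTranspose_zero hC
  rw [← posEigCount_eq_of_eq_transpose_mul_mul hT (h₁.fromBlocks conjTranspose_zero h₂) hE
      hTE.symm, posEigCount_fromBlocks_zero h₁ h₂, posEigCount_fromBlocks_zero hA hneg,
    posEigCount_fromBlocks_zero hpos hC, posEigCount_diagonal, posEigCount_diagonal]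
  norm_num [add_comm, add_left_comm]
end
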